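/- Let m be a capacity on (X,𝒜), ▵ : m(𝒜)×m(𝒜) → m(𝒜) with a ▵ 0 = 0 ▵ a = 0 for all a ∈ m(𝒜), k ∈ (0,1], S₁,S₂,S₃ semicopulas, and ⋆,⊥ : [0,1]² → [0,1] nondecreasing with ⊥ left-continuous. Let φ₁ : [0,1] → [0,1] be nondecreasing and φ₂, φ₃ : [0,1] → [0,1] be increasing and right-continuous; let ψᵢ : [0,φᵢ(1)] → [0,1] be nondecreasing for i=1,2,3 with ψ₂, ψ₃ left-continuous. Assume condition (Z₁): for all c,d ∈ m(𝒜) there exist C,D ∈ 𝒜 with m(C)=c, m(D)=d and m(C∩D) = c ▵ d. If ψ₁(I_{S₁, A∩B}(φ₁(f⋆g))) ≥ ψ₂(I_{S₂, A}(φ₂(f))) ⊥ ψ₃(I_{S₃, B}(φ₃(g))) holds for all A,B ∈ 𝒜 and all f,g ∈ F^k such that f|_A and g|_B are m-positively dependent with respect to ▵, then ψ₁(S₁(φ₁(a⋆b), c▵d)) ≥ ψ₂(S₂(φ₂(a), c)) ⊥ ψ₃(S₃(φ₃(b), d)) for all a,b ∈ [0,k] and all c,d ∈ m(𝒜). -/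

import Mathlib

open Set ENNReal

noncomputable def uSugeno {X : Type*} (ybar : ℝ≥0∞) (op : ℝ≥0∞ → ℝ≥0∞ → ℝ≥0∞)
    (m : Set X → ℝ≥0∞) (D : Set X) (f : X → ℝ≥0∞) : ℝ≥0∞ :=
  ⨆ t ∈ Set.Iic ybar, op t (m (D ∩ {x | t ≤ f x}))

noncomputable def qInt {X : Type*} (oti : ℝ≥0∞ → ℝ≥0∞ → ℝ≥0∞)
    (m : Set X → ℝ≥0∞) (f : X → ℝ≥0∞) : ℝ≥0∞ :=
  ⨆ t ∈ Set.Iic (1 : ℝ≥0∞), oti (m {x | t ≤ f x}) t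

def Mono2On (op : ℝ≥0∞ → ℝ≥0∞ → ℝ≥0∞) (s t : Set ℝ≥0∞) : Prop :=
  ∀ ⦃a₁⦄, a₁ ∈ s → ∀ ⦃b₁⦄, b₁ ∈ t → ∀ ⦃a₂⦄, a₂ ∈ s → ∀ ⦃b₂⦄, b₂ ∈ t →
    a₁ ≤ a₂ → b₁ ≤ b₂ → op a₁ b₁ ≤ op a₂ b₂

def LeftContOn (g : ℝ≥0∞ → ℝ≥0∞) (s : Set ℝ≥0∞) : Prop :=
  ∀ x ∈ s, ContinuousWithinAt g (Set.Iic x) x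

def RightContOn (g : ℝ≥0∞ → ℝ≥0∞) (s : Set ℝ≥0∞) : Prop :=
  ∀ x ∈ s, ContinuousWithinAt g (Set.Ici x) x

def LeftCont2On (op : ℝ≥0∞ → ℝ≥0∞ → ℝ≥0∞) (s t : Set ℝ≥0∞) : Prop :=
  (∀ b ∈ t, ∀ a ∈ s, ContinuousWithinAt (fun x => op x b) (Set.Iic a) a) ∧
  (∀ a ∈ s, ∀ b ∈ t, ContinuousWithinAt (fun y => op a y) (Set.Iic b) b)

def mRange {X : Type*} [MeasurableSpace X] (m : Set X → ℝ≥0∞) : Set ℝ≥0∞ :=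
  {c | ∃ A : Set X, MeasurableSet A ∧ m A = c}

def MonotoneMeasure {X : Type*} [MeasurableSpace X] (m : Set X → ℝ≥0∞) : Prop :=
  m ∅ = 0 ∧ 0 < m Set.univ ∧
    ∀ ⦃A B : Set X⦄, MeasurableSet A → MeasurableSet B → A ⊆ B → m A ≤ m B

def IsCapacity {X : Type*} [MeasurableSpace X] (m : Set X → ℝ≥0∞) : Prop :=
  m ∅ = 0 ∧ m Set.univ = 1 ∧
    ∀ ⦃A B : Set X⦄, MeasurableSet A → MeasurableSet B → A ⊆ B → m A ≤ m B

def ComonotoneOn {X : Type*} (D : Set X) (f g : X → ℝ≥0∞) : Prop :=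
  ∀ x ∈ D, ∀ y ∈ D, f x < f y → g x ≤ g y

def IsSemicopula (S : ℝ≥0∞ → ℝ≥0∞ → ℝ≥0∞) : Prop :=
  Mono2On S (Set.Iic 1) (Set.Iic 1) ∧
    ∀ a ∈ Set.Iic (1 : ℝ≥0∞), S a 1 = a ∧ S 1 a = a

def MPosDep {X : Type*} (m : Set X → ℝ≥0∞) (tri : ℝ≥0∞ → ℝ≥0∞ → ℝ≥0∞)
    (k : ℝ≥0∞) (A B : Set X) (f g : X → ℝ≥0∞) : Prop :=
  ∀ α ∈ Set.Iic k, ∀ β ∈ Set.Iic k,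
    tri (m (A ∩ {x | α ≤ f x})) (m (B ∩ {x | β ≤ g x})) ≤
      m (A ∩ B ∩ {x | α ≤ f x} ∩ {x | β ≤ g x})

/-!
Apply the assumed inequality to the constant functions `a` and `b` on the sets `C`, `D` given by
(Z₁). These are `m`-positively dependent because `▵` vanishes as soon as one argument is `0`, and
the seminormed integral of a constant `v` over `E` is `S v (m E)`.
-/

section ConstantFunctions

variable {X : Type*}

lemma measure_inter_setOf_const_le (m : Set X → ℝ≥0∞) (hm0 : m ∅ = 0) (E : Set X)
    (t v : ℝ≥0∞) : m (E ∩ {_x | t ≤ v}) = if t ≤ v then m E else 0 := by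
  split_ifs with h <;> simp [h, hm0]

lemma IsSemicopula.uSugeno_const {S : ℝ≥0∞ → ℝ≥0∞ → ℝ≥0∞} (hS : IsSemicopula S)
    (m : Set X → ℝ≥0∞) (hm0 : m ∅ = 0) (E : Set X) (hE : m E ≤ 1) {v : ℝ≥0∞} (hv : v ≤ 1) :
    uSugeno 1 S m E (fun _ => v) = S v (m E) := by
  obtain ⟨hmono, hunit⟩ := hS
  refine le_antisymm (iSup₂_le fun t ht => ?_) ?_
  · rw [measure_inter_setOf_const_le m hm0]
    split_ifs with htv
    · exact hmono ht hE hv hE htv le_rfl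
    · have h0 : (0 : ℝ≥0∞) ∈ Iic 1 := mem_Iic.mpr zero_le
      calc S t 0 ≤ S 1 0 := hmono ht h0 self_mem_Iic h0 ht le_rfl
        _ = 0 := (hunit 0 h0).2
        _ ≤ S v (m E) := zero_le
  · calc S v (m E) = S v (m (E ∩ {_x | v ≤ v})) := by
          rw [measure_inter_setOf_const_le m hm0, if_pos le_rfl]
      _ ≤ uSugeno 1 S m E (fun _ => v) :=
          le_biSup (fun t => S t (m (E ∩ {_x | t ≤ v}))) (mem_Iic.mpr hv)

variable [MeasurableSpace X]

lemma IsCapacity.le_one {m : Set X → ℝ≥0∞} (hm : IsCapacity m) {A : Set X}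
    (hA : MeasurableSet A) : m A ≤ 1 :=
  hm.2.1 ▸ hm.2.2 hA MeasurableSet.univ (subset_univ A)

lemma mPosDep_const {m : Set X → ℝ≥0∞} (hm0 : m ∅ = 0) {tri : ℝ≥0∞ → ℝ≥0∞ → ℝ≥0∞}
    (htri_zero : ∀ a ∈ mRange m, tri a 0 = 0 ∧ tri 0 a = 0) (k : ℝ≥0∞) {C D : Set X}
    (hC : MeasurableSet C) (hD : MeasurableSet D) (hCD : m (C ∩ D) = tri (m C) (m D))
    (a b : ℝ≥0∞) : MPosDep m tri k C D (fun _ => a) (fun _ => b) := by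
  have h0 : (0 : ℝ≥0∞) ∈ mRange m := ⟨∅, MeasurableSet.empty, hm0⟩
  intro α _ β _
  simp only [measure_inter_setOf_const_le m hm0]
  split_ifs <;>
    simp [hCD, (htri_zero _ ⟨C, hC, rfl⟩).1, (htri_zero _ ⟨D, hD, rfl⟩).2, (htri_zero 0 h0).1]

end ConstantFunctions

theorem statement8_general {X : Type*} [MeasurableSpace X]
    (m : Set X → ℝ≥0∞) (hm : IsCapacity m)
    (tri : ℝ≥0∞ → ℝ≥0∞ → ℝ≥0∞)
    (htri_zero : ∀ a ∈ mRange m, tri a 0 = 0 ∧ tri 0 a = 0)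
    (k : ℝ≥0∞) (hk1 : k ≤ 1)
    (S₁ S₂ S₃ : ℝ≥0∞ → ℝ≥0∞ → ℝ≥0∞)
    (hS₁ : IsSemicopula S₁) (hS₂ : IsSemicopula S₂) (hS₃ : IsSemicopula S₃)
    (star bot : ℝ≥0∞ → ℝ≥0∞ → ℝ≥0∞)
    (hstar_maps : ∀ a ∈ Set.Iic (1 : ℝ≥0∞), ∀ b ∈ Set.Iic (1 : ℝ≥0∞), star a b ∈ Set.Iic 1)
    (φ₁ φ₂ φ₃ : ℝ≥0∞ → ℝ≥0∞)
    (hφ₁_maps : Set.MapsTo φ₁ (Set.Iic 1) (Set.Iic 1))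
    (hφ₂_maps : Set.MapsTo φ₂ (Set.Iic 1) (Set.Iic 1))
    (hφ₃_maps : Set.MapsTo φ₃ (Set.Iic 1) (Set.Iic 1))
    (ψ₁ ψ₂ ψ₃ : ℝ≥0∞ → ℝ≥0∞)
    (hZ₁ : ∀ c ∈ mRange m, ∀ d ∈ mRange m, ∃ C D : Set X,
      MeasurableSet C ∧ MeasurableSet D ∧ m C = c ∧ m D = d ∧ m (C ∩ D) = tri c d)
    (hcheb : ∀ (A B : Set X), MeasurableSet A → MeasurableSet B →
      ∀ (f g : X → ℝ≥0∞), Measurable f → Measurable g →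
        (∀ x, f x ≤ k) → (∀ x, g x ≤ k) → MPosDep m tri k A B f g →
          bot (ψ₂ (uSugeno 1 S₂ m A fun x => φ₂ (f x)))
              (ψ₃ (uSugeno 1 S₃ m B fun x => φ₃ (g x)))
            ≤ ψ₁ (uSugeno 1 S₁ m (A ∩ B) fun x => φ₁ (star (f x) (g x)))) :
    ∀ a ∈ Set.Iic k, ∀ b ∈ Set.Iic k, ∀ c ∈ mRange m, ∀ d ∈ mRange m,
      bot (ψ₂ (S₂ (φ₂ a) c)) (ψ₃ (S₃ (φ₃ b) d)) ≤
        ψ₁ (S₁ (φ₁ (star a b)) (tri c d)) := by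
  intro a ha b hb c hc d hd
  obtain ⟨C, D, hC, hD, rfl, rfl, hCD⟩ := hZ₁ c hc d hd
  have ha1 : a ≤ 1 := ha.trans hk1
  have hb1 : b ≤ 1 := hb.trans hk1
  have key := hcheb C D hC hD (fun _ => a) (fun _ => b) measurable_const measurable_const
    (fun _ => ha) (fun _ => hb) (mPosDep_const hm.1 htri_zero k hC hD hCD a b)
  rwa [hS₂.uSugeno_const m hm.1 C (hm.le_one hC) (hφ₂_maps ha1),
    hS₃.uSugeno_const m hm.1 D (hm.le_one hD) (hφ₃_maps hb1),
    hS₁.uSugeno_const m hm.1 (C ∩ D) (hm.le_one (hC.inter hD))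
      (hφ₁_maps (hstar_maps a ha1 b hb1)), hCD] at key

theorem statement8 {X : Type*} [MeasurableSpace X]
    (m : Set X → ℝ≥0∞) (hm : IsCapacity m)
    (tri : ℝ≥0∞ → ℝ≥0∞ → ℝ≥0∞)
    (htri_maps : ∀ c ∈ mRange m, ∀ d ∈ mRange m, tri c d ∈ mRange m)
    (htri_zero : ∀ a ∈ mRange m, tri a 0 = 0 ∧ tri 0 a = 0)
    (k : ℝ≥0∞) (hk0 : 0 < k) (hk1 : k ≤ 1)
    (S₁ S₂ S₃ : ℝ≥0∞ → ℝ≥0∞ → ℝ≥0∞)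
    (hS₁ : IsSemicopula S₁) (hS₂ : IsSemicopula S₂) (hS₃ : IsSemicopula S₃)
    (star bot : ℝ≥0∞ → ℝ≥0∞ → ℝ≥0∞)
    (hstar_maps : ∀ a ∈ Set.Iic (1 : ℝ≥0∞), ∀ b ∈ Set.Iic (1 : ℝ≥0∞), star a b ∈ Set.Iic 1)
    (hstar_mono : Mono2On star (Set.Iic 1) (Set.Iic 1))
    (hbot_maps : ∀ a ∈ Set.Iic (1 : ℝ≥0∞), ∀ b ∈ Set.Iic (1 : ℝ≥0∞), bot a b ∈ Set.Iic 1)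
    (hbot_mono : Mono2On bot (Set.Iic 1) (Set.Iic 1))
    (hbot_lc : LeftCont2On bot (Set.Iic 1) (Set.Iic 1))
    (φ₁ φ₂ φ₃ : ℝ≥0∞ → ℝ≥0∞)
    (hφ₁_maps : Set.MapsTo φ₁ (Set.Iic 1) (Set.Iic 1))
    (hφ₁_mono : MonotoneOn φ₁ (Set.Iic 1))
    (hφ₂_maps : Set.MapsTo φ₂ (Set.Iic 1) (Set.Iic 1))
    (hφ₂_mono : StrictMonoOn φ₂ (Set.Iic 1))
    (hφ₂_rc : RightContOn φ₂ (Set.Iic 1))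
    (hφ₃_maps : Set.MapsTo φ₃ (Set.Iic 1) (Set.Iic 1))
    (hφ₃_mono : StrictMonoOn φ₃ (Set.Iic 1))
    (hφ₃_rc : RightContOn φ₃ (Set.Iic 1))
    (ψ₁ ψ₂ ψ₃ : ℝ≥0∞ → ℝ≥0∞)
    (hψ₁_maps : Set.MapsTo ψ₁ (Set.Iic (φ₁ 1)) (Set.Iic 1))
    (hψ₁_mono : MonotoneOn ψ₁ (Set.Iic (φ₁ 1)))
    (hψ₂_maps : Set.MapsTo ψ₂ (Set.Iic (φ₂ 1)) (Set.Iic 1))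
    (hψ₂_mono : MonotoneOn ψ₂ (Set.Iic (φ₂ 1)))
    (hψ₂_lc : LeftContOn ψ₂ (Set.Iic (φ₂ 1)))
    (hψ₃_maps : Set.MapsTo ψ₃ (Set.Iic (φ₃ 1)) (Set.Iic 1))
    (hψ₃_mono : MonotoneOn ψ₃ (Set.Iic (φ₃ 1)))
    (hψ₃_lc : LeftContOn ψ₃ (Set.Iic (φ₃ 1)))
    (hZ₁ : ∀ c ∈ mRange m, ∀ d ∈ mRange m, ∃ C D : Set X,
      MeasurableSet C ∧ MeasurableSet D ∧ m C = c ∧ m D = d ∧ m (C ∩ D) = tri c d)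
    (hcheb : ∀ (A B : Set X), MeasurableSet A → MeasurableSet B →
      ∀ (f g : X → ℝ≥0∞), Measurable f → Measurable g →
        (∀ x, f x ≤ k) → (∀ x, g x ≤ k) → MPosDep m tri k A B f g →
          bot (ψ₂ (uSugeno 1 S₂ m A fun x => φ₂ (f x)))
              (ψ₃ (uSugeno 1 S₃ m B fun x => φ₃ (g x)))
            ≤ ψ₁ (uSugeno 1 S₁ m (A ∩ B) fun x => φ₁ (star (f x) (g x)))) :
    ∀ a ∈ Set.Iic k, ∀ b ∈ Set.Iic k, ∀ c ∈ mRange m, ∀ d ∈ mRange m,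
      bot (ψ₂ (S₂ (φ₂ a) c)) (ψ₃ (S₃ (φ₃ b) d)) ≤
        ψ₁ (S₁ (φ₁ (star a b)) (tri c d)) :=
  statement8_general m hm tri htri_zero k hk1 S₁ S₂ S₃ hS₁ hS₂ hS₃ star bot hstar_maps φ₁ φ₂ φ₃
    hφ₁_maps hφ₂_maps hφ₃_maps ψ₁ ψ₂ ψ₃ hZ₁ hcheb
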